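/- Let t = (t_{i,j,k})_{1 ≤ i < j < k ≤ n} be a family of integers such that the normal form map N_t : ℤ^n → G(t) is bijective. Then there exist multivariate polynomials K_1, …, K_n ∈ ℚ[x_1, …, x_n, z] such that K_i(x, z) ∈ ℤ for all x ∈ ℤ^n and z ∈ ℤ and, for all x ∈ ℤ^n and z ∈ ℤ, the equation (a_1^{x_1} ⋯ a_n^{x_n})^z = a_1^{K_1(x,z)} ⋯ a_n^{K_n(x,z)} holds in G(t). -/

import Mathlib

/-!
Write every element of `G(t)` in normal form and call the exponents its coordinates. The
relations say that `a_i⁻¹ a_j a_i = a_j · a_{j+1}^* ⋯ a_n^*` for `i < j`. By downward induction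
on `j` one shows that the coordinates of `(a_1^{u_1} ⋯ a_n^{u_n}) · a_j^s` are unitriangular in
`u`: coordinate `k` is `u_k + [k = j] s` plus a polynomial in `s` and the `u_i` with `i < k`.
For `s = 1` this is obtained by moving `a_j` to the left past `a_{j+1}^{u_{j+1}} ⋯ a_n^{u_n}`,
which turns that tail into a product of powers of normal words in `a_{j+1}, …, a_n`, covered by
the induction hypothesis. The `s`-th iterate of a unitriangular map is again unitriangular and
polynomial in `s`, because each coordinate changes at every step by a polynomial in coordinates
that are already known to be polynomial, and discrete integration (with Bernoulli polynomials)
preserves polynomiality. Composing over `j` gives the multiplication polynomials, and iterating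
right multiplication by `a_1^{x_1} ⋯ a_n^{x_n}` gives the powering polynomials.
-/

namespace HallPoly

/-- The ordered product `g_1^{e_1} ⋯ g_n^{e_n}` taken in increasing order of indices. -/
def prodPow {Γ : Type*} [Group Γ] (n : ℕ) (g : Fin n → Γ) (e : Fin n → ℤ) : Γ :=
  ((List.finRange n).map fun k => g k ^ e k).prod

/-- The relators of the presented group `G(t)`:
`(a_i · a_j · a_{j+1}^{t_{i,j,j+1}} ⋯ a_n^{t_{i,j,n}})⁻¹ · (a_j · a_i)` for `1 ≤ i < j ≤ n`. -/
def rels (n : ℕ) (t : Fin n → Fin n → Fin n → ℤ) : Set (FreeGroup (Fin n)) :=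
  { r | ∃ i j : Fin n, i < j ∧
      r = (FreeGroup.of i * FreeGroup.of j *
            prodPow n FreeGroup.of (fun k => if j < k then t i j k else 0))⁻¹ *
          (FreeGroup.of j * FreeGroup.of i) }

/-- The presented group `G(t)` with generators `a_1, …, a_n` and relations
`a_j·a_i = a_i·a_j·a_{j+1}^{t_{i,j,j+1}} ⋯ a_n^{t_{i,j,n}}` for `1 ≤ i < j ≤ n`. -/
abbrev G (n : ℕ) (t : Fin n → Fin n → Fin n → ℤ) : Type := PresentedGroup (rels n t)

/-- The generators `a_1, …, a_n` of `G(t)`. -/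
def a (n : ℕ) (t : Fin n → Fin n → Fin n → ℤ) (i : Fin n) : G n t :=
  PresentedGroup.of i

/-- The normal form map `N_t : ℤⁿ → G(t)`, `x ↦ a_1^{x_1} ⋯ a_n^{x_n}`. -/
def N (n : ℕ) (t : Fin n → Fin n → Fin n → ℤ) (x : Fin n → ℤ) : G n t :=
  prodPow n (a n t) x

open MvPolynomial

section IntPoly

variable {σ τ : Type*}

/-- Functions `ℤ^σ → ℤ` that are restrictions of polynomials in `ℚ[σ]`. -/
noncomputable def intPoly (σ : Type*) : Subring ((σ → ℤ) → ℤ) :=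
  (RingHom.pi fun x : σ → ℤ => (eval fun i => (x i : ℚ))).range.comap
    ((Int.castRingHom ℚ).compLeft (σ → ℤ))

theorem mem_intPoly {f : (σ → ℤ) → ℤ} :
    f ∈ intPoly σ ↔ ∃ P : MvPolynomial σ ℚ, ∀ x, eval (fun i => (x i : ℚ)) P = f x := by
  simp [intPoly, funext_iff, RingHom.pi_apply]

theorem apply_mem_intPoly (i : σ) : (fun x : σ → ℤ => x i) ∈ intPoly σ :=
  mem_intPoly.2 ⟨X i, fun _ => eval_X ..⟩

theorem comp_mem_intPoly {f : (σ → ℤ) → ℤ} (hf : f ∈ intPoly σ) {F : (τ → ℤ) → σ → ℤ}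
    (hF : ∀ i, (fun x => F x i) ∈ intPoly τ) : (fun x => f (F x)) ∈ intPoly τ := by
  obtain ⟨P, hP⟩ := mem_intPoly.1 hf
  choose Q hQ using fun i => mem_intPoly.1 (hF i)
  refine mem_intPoly.2 ⟨bind₁ Q P, fun x => ?_⟩
  rw [eval, eval₂Hom_bind₁, ← hP]
  exact congrArg (eval₂Hom _ · P) (funext fun i => hQ i x)

theorem indicator_apply_mem_intPoly {F : (τ → ℤ) → σ → ℤ} (s : Set σ) {i : σ}
    (hF : (fun x => F x i) ∈ intPoly τ) : (fun x => s.indicator (F x) i) ∈ intPoly τ := by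
  by_cases hi : i ∈ s
  · simpa only [Set.indicator_of_mem hi] using hF
  · simp only [Set.indicator_of_notMem hi]
    exact zero_mem _

theorem piSingle_apply_mem_intPoly [DecidableEq σ] {f : (τ → ℤ) → ℤ} (hf : f ∈ intPoly τ)
    (m i : σ) : (fun x => (Pi.single m (f x) : σ → ℤ) i) ∈ intPoly τ := by
  by_cases hi : i = m
  · subst hi
    simpa using hf
  · simp only [Pi.single_apply, hi, if_false]
    exact zero_mem _

theorem sumElim_apply_mem_intPoly {σ' : Type*} {F : (τ → ℤ) → σ → ℤ} {F' : (τ → ℤ) → σ' → ℤ}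
    (hF : ∀ i, (fun x => F x i) ∈ intPoly τ) (hF' : ∀ i, (fun x => F' x i) ∈ intPoly τ) :
    ∀ i, (fun x => Sum.elim (F x) (F' x) i) ∈ intPoly τ
  | .inl i => hF i
  | .inr i => hF' i

end IntPoly

section DiscreteIntegration

variable {σ : Type*}

theorem eq_of_forall_add_one_sub_eq {M : Type*} [AddCommGroup M] {a b : ℤ → M} (h₀ : a 0 = b 0)
    (h : ∀ s, a (s + 1) - a s = b (s + 1) - b s) : a = b := by
  have hper : Function.Periodic (a - b) 1 := fun s => by
    simp only [Pi.sub_apply]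
    rw [sub_eq_sub_iff_sub_eq_sub, h]
  funext s
  simpa [h₀, sub_eq_zero] using hper.int_mul_eq s

noncomputable def shiftLast (σ : Type*) :
    MvPolynomial (σ ⊕ Unit) ℚ →ₐ[ℚ] MvPolynomial (σ ⊕ Unit) ℚ :=
  aeval (Sum.elim (fun i => X (.inl i)) fun _ => X (.inr ()) + 1)

theorem eval_shiftLast (x : σ → ℚ) (s : ℚ) (Q : MvPolynomial (σ ⊕ Unit) ℚ) :
    eval (Sum.elim x fun _ => s) (shiftLast σ Q) = eval (Sum.elim x fun _ => s + 1) Q := by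
  rw [shiftLast, aeval_eq_bind₁, eval, eval₂Hom_bind₁]
  congr 2
  ext (i | ⟨⟩) <;> simp

theorem exists_shiftLast_sub_eq (P : MvPolynomial (σ ⊕ Unit) ℚ) :
    ∃ Q, shiftLast σ Q - Q = P := by
  -- the factor `X (.inr ()) ^ d` absorbs the multiplications by the last variable
  suffices h : ∀ d : ℕ, ∃ Q, shiftLast σ Q - Q = P * X (.inr ()) ^ d by
    simpa using h 0
  induction P using MvPolynomial.induction_on with
  | C a =>
    intro d
    set B : Polynomial ℚ := ((d : ℚ) + 1)⁻¹ • Polynomial.bernoulli (d + 1)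
    have hB : B.comp (1 + Polynomial.X) - B = Polynomial.X ^ d := by
      rw [Polynomial.smul_comp, Polynomial.bernoulli_comp_one_add_X, add_tsub_cancel_right,
        smul_add, add_sub_cancel_left, ← Nat.cast_smul_eq_nsmul ℚ, smul_smul]
      push_cast
      rw [inv_mul_cancel₀ (by positivity), one_smul]
    refine ⟨C a * Polynomial.aeval (X (.inr ())) B, ?_⟩
    have hshift : shiftLast σ (Polynomial.aeval (X (.inr ())) B) =
        Polynomial.aeval (X (.inr ())) (B.comp (1 + Polynomial.X)) := by
      rw [shiftLast, ← Polynomial.aeval_algHom_apply, Polynomial.aeval_comp]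
      simp [add_comm]
    rw [map_mul, shiftLast, aeval_C, ← shiftLast, hshift, algebraMap_eq, ← mul_sub, ← map_sub, hB]
    simp
  | add p q hp hq =>
    intro d
    obtain ⟨Q₁, h₁⟩ := hp d
    obtain ⟨Q₂, h₂⟩ := hq d
    exact ⟨Q₁ + Q₂, by rw [map_add, add_mul, ← h₁, ← h₂]; ring⟩
  | mul_X p i hp =>
    intro d
    rcases i with i | ⟨⟩
    · obtain ⟨Q, hQ⟩ := hp d
      refine ⟨X (.inl i) * Q, ?_⟩
      rw [map_mul, shiftLast, aeval_X, ← shiftLast, Sum.elim_inl, ← mul_sub, hQ]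
      ring
    · obtain ⟨Q, hQ⟩ := hp (d + 1)
      exact ⟨Q, by rw [hQ]; ring⟩

theorem mem_intPoly_of_add_one_sub {f : (σ → ℤ) → ℤ → ℤ} (h₀ : (fun x => f x 0) ∈ intPoly σ)
    (hΔ : (fun v : σ ⊕ Unit → ℤ => f (fun i => v (.inl i)) (v (.inr ()) + 1) -
      f (fun i => v (.inl i)) (v (.inr ()))) ∈ intPoly (σ ⊕ Unit)) :
    (fun v : σ ⊕ Unit → ℤ => f (fun i => v (.inl i)) (v (.inr ()))) ∈ intPoly (σ ⊕ Unit) := by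
  obtain ⟨P₀, hP₀⟩ := mem_intPoly.1 h₀
  obtain ⟨P, hP⟩ := mem_intPoly.1 hΔ
  obtain ⟨Q, hQ⟩ := exists_shiftLast_sub_eq P
  let pt (x : σ → ℤ) (s : ℤ) : σ ⊕ Unit → ℚ := Sum.elim (fun i => (x i : ℚ)) fun _ => (s : ℚ)
  have hpt (v : σ ⊕ Unit → ℤ) : (fun w => (v w : ℚ)) = pt (fun i => v (.inl i)) (v (.inr ())) := by
    ext (i | ⟨⟩) <;> rfl
  have hQ₀ (x : σ → ℤ) (s : ℤ) :
      eval (pt x s) (aeval (Sum.elim (fun i => X (Sum.inl i)) 0) Q) = eval (pt x 0) Q := by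
    rw [aeval_eq_bind₁, eval, eval₂Hom_bind₁]
    congr 2
    ext (i | ⟨⟩) <;> simp [pt]
  set R := rename Sum.inl P₀ + Q - aeval (Sum.elim (fun i => X (Sum.inl i)) 0) Q
  have hR (x : σ → ℤ) : (fun s => eval (pt x s) R) = fun s => (f x s : ℚ) := by
    refine eq_of_forall_add_one_sub_eq ?_ fun s => ?_
    · simp only [R, map_sub, map_add, hQ₀, add_sub_cancel_right, eval_rename]
      exact hP₀ x
    · have h := hP (Sum.elim x fun _ => s)
      rw [hpt, ← hQ, map_sub, eval_shiftLast] at h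
      simp only [R, map_sub, map_add, eval_rename, hQ₀]
      simp only [pt, Function.comp_def, Sum.elim_inl, Sum.elim_inr, Int.cast_sub, Int.cast_add,
        Int.cast_one] at h ⊢
      linear_combination h
  refine mem_intPoly.2 ⟨R, fun v => ?_⟩
  rw [hpt]
  exact congrFun (hR _) _

end DiscreteIntegration

theorem indicator_Iio_indicator_Iio {n : ℕ} {j k : Fin n} (h : j ≤ k) (u : Fin n → ℤ) :
    (Set.Iio j).indicator ((Set.Iio k).indicator u) = (Set.Iio j).indicator u := by
  rw [Set.indicator_indicator, Set.Iio_inter_Iio, min_eq_left h]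

theorem indicator_piSingle {ι : Type*} [DecidableEq ι] (s : Set ι) (y : ι → ℤ) (m : ι) :
    s.indicator (Pi.single m (y m)) = Pi.single m (s.indicator y m) := by
  ext i
  rcases eq_or_ne i m with rfl | hi
  · by_cases hs : i ∈ s <;> simp [hs]
  · simp [hi]

section Unitriangular

variable {n : ℕ} {σ : Type*}

def IsUnitriangular (F : (σ → ℤ) → (Fin n → ℤ) → Fin n → ℤ) : Prop :=
  ∀ k, ∃ φ ∈ intPoly (σ ⊕ Fin n), ∀ p u, F p u k = u k + φ (Sum.elim p ((Set.Iio k).indicator u))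

theorem exists_indicator_Iio_eq {G : (σ → ℤ) → (Fin n → ℤ) → Fin n → ℤ} {k : Fin n}
    (hG : ∀ j < k, ∃ φ ∈ intPoly (σ ⊕ Fin n), ∀ p u,
      G p u j = u j + φ (Sum.elim p ((Set.Iio j).indicator u))) :
    ∃ T : (σ ⊕ Fin n → ℤ) → Fin n → ℤ, (∀ j, (fun v => T v j) ∈ intPoly (σ ⊕ Fin n)) ∧
      ∀ p u, (Set.Iio k).indicator (G p u) = T (Sum.elim p ((Set.Iio k).indicator u)) := by
  choose φ hφ hGφ using hG
  refine ⟨fun v j => if h : j < k then v (.inr j) +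
    φ j h (Sum.elim (fun i => v (.inl i)) ((Set.Iio j).indicator fun i => v (.inr i))) else 0,
    fun j => ?_, fun p u => ?_⟩
  · by_cases hj : j < k
    · simp only [hj, dif_pos]
      exact add_mem (apply_mem_intPoly _) (comp_mem_intPoly (hφ j hj)
        (sumElim_apply_mem_intPoly (fun i => apply_mem_intPoly _)
          fun i => indicator_apply_mem_intPoly _ (apply_mem_intPoly _)))
    · simp only [hj, dif_neg, not_false_eq_true]
      exact zero_mem _
  · ext j
    by_cases hj : j < k
    · simp [hj, hGφ j hj, indicator_Iio_indicator_Iio hj.le]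
    · simp [hj]

theorem IsUnitriangular.iterate {F : (σ → ℤ) → (Fin n → ℤ) → Fin n → ℤ} (hF : IsUnitriangular F)
    {f : (σ → ℤ) → ℤ → (Fin n → ℤ) → Fin n → ℤ} (h₀ : ∀ p u, f p 0 u = u)
    (hsucc : ∀ p s u, f p (s + 1) u = F p (f p s u)) :
    IsUnitriangular fun q : σ ⊕ Unit → ℤ => f (fun i => q (.inl i)) (q (.inr ())) := by
  intro k
  induction k using WellFoundedLT.induction with
  | _ k ih =>
  obtain ⟨T, hT, hfT⟩ := exists_indicator_Iio_eq ih
  obtain ⟨φ, hφ, hFφ⟩ := hF k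
  have hstep (p : σ → ℤ) (s : ℤ) (u : Fin n → ℤ) : f p (s + 1) u k - f p s u k =
      φ (Sum.elim p (T (Sum.elim (Sum.elim p fun _ => s) ((Set.Iio k).indicator u)))) := by
    rw [hsucc, hFφ, ← show (Set.Iio k).indicator (f p s u) = _ from hfT (Sum.elim p fun _ => s) u]
    ring
  let D (v : σ ⊕ Fin n → ℤ) (s : ℤ) : ℤ := f (fun i => v (.inl i)) s (fun j => v (.inr j)) k
  have hD : (fun v : (σ ⊕ Fin n) ⊕ Unit → ℤ => D (fun i => v (.inl i)) (v (.inr ()))) ∈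
      intPoly ((σ ⊕ Fin n) ⊕ Unit) := by
    refine mem_intPoly_of_add_one_sub (by simpa [D, h₀] using apply_mem_intPoly _) ?_
    simp only [D, hstep]
    exact comp_mem_intPoly hφ (sumElim_apply_mem_intPoly (fun i => apply_mem_intPoly _)
      fun j => comp_mem_intPoly (hT j) (sumElim_apply_mem_intPoly (sumElim_apply_mem_intPoly
        (fun i => apply_mem_intPoly _) fun _ => apply_mem_intPoly _)
          fun i => indicator_apply_mem_intPoly _ (apply_mem_intPoly _)))
  refine ⟨fun v => D (Sum.elim (fun i => v (.inl (.inl i))) fun j => v (.inr j))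
      (v (.inl (.inr ()))),
    comp_mem_intPoly hD (F := fun v : (σ ⊕ Unit) ⊕ Fin n → ℤ => Sum.elim (Sum.elim
      (fun i => v (.inl (.inl i))) fun j => v (.inr j)) fun _ => v (.inl (.inr ()))) ?_,
    fun q u => ?_⟩
  · rintro ((i | j) | ⟨⟩) <;> exact apply_mem_intPoly _
  have h := eq_of_forall_add_one_sub_eq (a := fun s => f (fun i => q (.inl i)) s u k - u k)
    (b := fun s => f (fun i => q (.inl i)) s ((Set.Iio k).indicator u) k)
    (by simp [h₀]) fun s => by
      simp only [sub_sub_sub_cancel_right, hstep, Set.indicator_indicator, Set.inter_self]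
  simp only [D, Sum.elim_inl, Sum.elim_inr, ← congrFun h (q (.inr ()))]
  ring

end Unitriangular

section NormalForm

variable {Γ : Type*} [Group Γ] {n : ℕ} {g : Fin n → Γ}

theorem prodPow_zero : prodPow n g 0 = 1 :=
  List.prod_eq_one (by simp)

theorem map_prodPow {Δ : Type*} [Group Δ] (f : Γ →* Δ) (e : Fin n → ℤ) :
    f (prodPow n g e) = prodPow n (fun k => f (g k)) e := by
  simp [prodPow, map_list_prod, Function.comp_def]

theorem prodPow_eq_take_mul_drop (e : Fin n → ℤ) (j : Fin n) :
    prodPow n g e = (((List.finRange n).take j).map fun k => g k ^ e k).prod * g j ^ e j *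
      (((List.finRange n).drop (j + 1)).map fun k => g k ^ e k).prod := by
  have hj : (j : ℕ) < (List.finRange n).length := by simp
  rw [prodPow, ← List.take_append_drop j (List.finRange n), List.drop_eq_getElem_cons hj]
  simp [mul_assoc]

theorem prodPow_eq_mul_zpow_mul (e : Fin n → ℤ) (j : Fin n) :
    prodPow n g e = prodPow n g ((Set.Iio j).indicator e) * g j ^ e j *
      prodPow n g ((Set.Ioi j).indicator e) := by
  have lt_of_mem_take {k : Fin n} (hk : k ∈ (List.finRange n).take j) : k < j := by
    obtain ⟨i, hi, rfl⟩ := List.mem_take_iff_getElem.1 hk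
    simp [Fin.lt_def]
    omega
  have lt_of_mem_drop {k : Fin n} (hk : k ∈ (List.finRange n).drop (j + 1)) : j < k := by
    obtain ⟨i, hi, rfl⟩ := List.mem_drop_iff_getElem.1 hk
    simp [Fin.lt_def]
    omega
  have hIio : ((List.finRange n).take j).map (fun k => g k ^ (Set.Iio j).indicator e k) =
      ((List.finRange n).take j).map fun k => g k ^ e k :=
    List.map_congr_left fun k hk => by
      rw [Set.indicator_of_mem (Set.mem_Iio.2 (lt_of_mem_take hk))]
  have hIoi : ((List.finRange n).drop (j + 1)).map (fun k => g k ^ (Set.Ioi j).indicator e k) =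
      ((List.finRange n).drop (j + 1)).map fun k => g k ^ e k :=
    List.map_congr_left fun k hk => by
      rw [Set.indicator_of_mem (Set.mem_Ioi.2 (lt_of_mem_drop hk))]
  have hIio' : (((List.finRange n).drop (j + 1)).map
      fun k => g k ^ (Set.Iio j).indicator e k).prod = 1 :=
    List.prod_eq_one <| List.forall_mem_map.2 fun k hk => by
      rw [Set.indicator_of_notMem (Set.notMem_Iio.2 (lt_of_mem_drop hk).le), zpow_zero]
  have hIoi' : (((List.finRange n).take j).map
      fun k => g k ^ (Set.Ioi j).indicator e k).prod = 1 :=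
    List.prod_eq_one <| List.forall_mem_map.2 fun k hk => by
      rw [Set.indicator_of_notMem (Set.notMem_Ioi.2 (lt_of_mem_take hk).le), zpow_zero]
  rw [prodPow_eq_take_mul_drop e j, prodPow_eq_take_mul_drop ((Set.Iio j).indicator e) j,
    prodPow_eq_take_mul_drop ((Set.Ioi j).indicator e) j, hIio, hIoi, hIio', hIoi']
  simp

theorem prodPow_mul_eq_mul_conj (u : Fin n → ℤ) (j : Fin n) :
    prodPow n g u * g j = prodPow n g ((Set.Iic j).indicator u + Pi.single j 1) *
      ((g j)⁻¹ * prodPow n g ((Set.Ioi j).indicator u) * g j) := by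
  set u' := (Set.Iic j).indicator u + Pi.single j 1
  have h₁ : (Set.Iio j).indicator u' = (Set.Iio j).indicator u := by
    ext i
    by_cases hi : i < j
    · simp [u', hi, hi.le, hi.ne]
    · simp [hi]
  have h₂ : (Set.Ioi j).indicator u' = 0 := by
    ext i
    by_cases hi : j < i
    · simp [u', hi, hi.not_ge, hi.ne']
    · simp [hi]
  rw [prodPow_eq_mul_zpow_mul u j, prodPow_eq_mul_zpow_mul u' j, h₁, h₂, prodPow_zero]
  simp only [u', Pi.add_apply, Set.indicator_of_mem (Set.mem_Iic.2 le_rfl), Pi.single_eq_same]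
  group

end NormalForm

section Collection

variable {Γ : Type*} [Group Γ] {n : ℕ} {g : Fin n → Γ} (hN : Function.Bijective (prodPow n g))

noncomputable def coords : Γ → Fin n → ℤ := (Equiv.ofBijective _ hN).symm

theorem prodPow_coords (x : Γ) : prodPow n g (coords hN x) = x :=
  (Equiv.ofBijective _ hN).apply_symm_apply x

theorem coords_prodPow (e : Fin n → ℤ) : coords hN (prodPow n g e) = e :=
  (Equiv.ofBijective _ hN).symm_apply_apply e

def supportedFrom (m : ℕ) : Set (Fin n → ℤ) := {y | ∀ i : Fin n, (i : ℕ) < m → y i = 0}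

def IsUnitriangularMul (h : (Fin n → ℤ) → Γ) (Y : Set (Fin n → ℤ)) : Prop :=
  ∀ k, ∃ φ ∈ intPoly (Fin n ⊕ Fin n), ∀ u, ∀ y ∈ Y, coords hN (prodPow n g u * h y) k =
    u k + y k + φ (Sum.elim ((Set.Iio k).indicator u) ((Set.Iio k).indicator y))

variable {hN}

theorem IsUnitriangularMul.coords_mul_of_indicator_eq_zero {h : (Fin n → ℤ) → Γ}
    {Y : Set (Fin n → ℤ)} (H : IsUnitriangularMul hN h Y) (hY : 0 ∈ Y) (h₀ : h 0 = 1)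
    {y : Fin n → ℤ} (hy : y ∈ Y) {k : Fin n} (hyk : (Set.Iio k).indicator y = 0) (u : Fin n → ℤ) :
    coords hN (prodPow n g u * h y) k = u k + y k := by
  obtain ⟨φ, -, hφ⟩ := H k
  have h0 := hφ u 0 hY
  rw [h₀, mul_one, coords_prodPow, Set.indicator_zero', Pi.zero_apply, add_zero,
    left_eq_add] at h0
  rw [hφ u y hy, hyk, h0, add_zero]

theorem IsUnitriangularMul.exists_indicator_Iio_coords_eq {h : (Fin n → ℤ) → Γ}
    {Y : Set (Fin n → ℤ)} (H : IsUnitriangularMul hN h Y) (k : Fin n) :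
    ∃ W : (Fin n ⊕ Fin n → ℤ) → Fin n → ℤ, (∀ j, (fun v => W v j) ∈ intPoly (Fin n ⊕ Fin n)) ∧
      ∀ u, ∀ y ∈ Y, (Set.Iio k).indicator (coords hN (prodPow n g u * h y)) =
        W (Sum.elim ((Set.Iio k).indicator u) ((Set.Iio k).indicator y)) := by
  choose φ hφ hφeq using H
  refine ⟨fun v j => if j < k then v (.inl j) + v (.inr j) + φ j (Sum.elim
    ((Set.Iio j).indicator fun i => v (.inl i)) ((Set.Iio j).indicator fun i => v (.inr i)))
    else 0, fun j => ?_, fun u y hy => ?_⟩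
  · by_cases hj : j < k
    · simp only [hj, if_true]
      exact add_mem (add_mem (apply_mem_intPoly _) (apply_mem_intPoly _))
        (comp_mem_intPoly (hφ j) (sumElim_apply_mem_intPoly
          (fun i => indicator_apply_mem_intPoly _ (apply_mem_intPoly _))
          fun i => indicator_apply_mem_intPoly _ (apply_mem_intPoly _)))
    · simp only [hj, if_false]
      exact zero_mem _
  · ext j
    by_cases hj : j < k
    · simp [hj, hφeq j u y hy, indicator_Iio_indicator_Iio hj.le]
    · simp [hj]

theorem IsUnitriangularMul.mul {m : Fin n} {h h₁ h₂ : (Fin n → ℤ) → Γ}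
    (H₁ : IsUnitriangularMul hN h₁ (Set.range (Pi.single m)))
    (H₂ : IsUnitriangularMul hN h₂ (supportedFrom (m + 1)))
    (hh : ∀ y ∈ supportedFrom m, h y = h₁ (Pi.single m (y m)) * h₂ ((Set.Ioi m).indicator y)) :
    IsUnitriangularMul hN h (supportedFrom m) := by
  intro k
  obtain ⟨φ₁, hφ₁, hφ₁eq⟩ := H₁ k
  obtain ⟨W, hW, hWeq⟩ := H₁.exists_indicator_Iio_coords_eq k
  obtain ⟨φ₂, hφ₂, hφ₂eq⟩ := H₂ k
  have hsingle : ∀ i, (fun v : Fin n ⊕ Fin n → ℤ => (Pi.single m (v (.inr m)) : Fin n → ℤ) i) ∈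
      intPoly (Fin n ⊕ Fin n) := piSingle_apply_mem_intPoly (apply_mem_intPoly _) m
  refine ⟨fun v => φ₁ (Sum.elim (fun i => v (.inl i)) (Pi.single m (v (.inr m)))) +
    φ₂ (Sum.elim (W (Sum.elim (fun i => v (.inl i)) (Pi.single m (v (.inr m)))))
      ((Set.Ioi m).indicator fun i => v (.inr i))),
    add_mem (comp_mem_intPoly hφ₁ (sumElim_apply_mem_intPoly (fun i => apply_mem_intPoly _)
      hsingle)) (comp_mem_intPoly hφ₂ (sumElim_apply_mem_intPoly (fun j => comp_mem_intPoly
        (hW j) (sumElim_apply_mem_intPoly (fun i => apply_mem_intPoly _) hsingle))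
      fun i => indicator_apply_mem_intPoly _ (apply_mem_intPoly _))), fun u y hy => ?_⟩
  have hy₂ : (Set.Ioi m).indicator y ∈ supportedFrom (m + 1) := fun i hi =>
    Set.indicator_of_notMem (Set.notMem_Ioi.2 (Fin.le_def.2 (Nat.lt_succ_iff.1 hi))) y
  have hyk : y k = (Pi.single m (y m) : Fin n → ℤ) k + (Set.Ioi m).indicator y k := by
    rcases lt_trichotomy k m with hkm | rfl | hkm
    · simp [hy k hkm, hkm.ne, hkm.not_gt]
    · simp
    · simp [hkm.ne', hkm]
  rw [hh y hy, ← mul_assoc, ← prodPow_coords hN (prodPow n g u * h₁ _), hφ₂eq _ _ hy₂,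
    hφ₁eq u _ ⟨_, rfl⟩, hWeq u _ ⟨_, rfl⟩, hyk]
  simp only [Sum.elim_inl, Sum.elim_inr, ← indicator_piSingle, Set.indicator_indicator,
    Set.inter_comm]
  ring

theorem isUnitriangularMul_map_prodPow (f : Γ →* Γ) {m : ℕ} (hm : m ≤ n)
    (H : ∀ i : Fin n, m ≤ i →
      IsUnitriangularMul hN (fun y => f (g i ^ y i)) (Set.range (Pi.single i))) :
    IsUnitriangularMul hN (fun y => f (prodPow n g y)) (supportedFrom m) := by
  induction hm using Nat.decreasingInduction with
  | self =>
    refine fun k => ⟨0, zero_mem _, fun u y hy => ?_⟩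
    obtain rfl : y = 0 := funext fun i => hy i i.isLt
    simp [prodPow_zero, coords_prodPow]
  | of_succ m hm ih =>
    refine IsUnitriangularMul.mul (m := ⟨m, hm⟩) (H _ le_rfl) (ih fun i hi => H i (by omega))
      fun y hy => ?_
    have hlow : (Set.Iio (⟨m, hm⟩ : Fin n)).indicator y = 0 :=
      funext fun i => Set.indicator_apply_eq_zero.2 fun hi => hy i hi
    rw [prodPow_eq_mul_zpow_mul y ⟨m, hm⟩, hlow, prodPow_zero, one_mul, map_mul,
      Pi.single_eq_same]

theorem coords_mul_zpow_apply {h : Γ} {k : Fin n} {c : ℤ}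
    (hh : ∀ u, coords hN (prodPow n g u * h) k = u k + c) (u : Fin n → ℤ) (s : ℤ) :
    coords hN (prodPow n g u * h ^ s) k = u k + s * c := by
  refine congrFun (eq_of_forall_add_one_sub_eq (a := fun s => coords hN (prodPow n g u * h ^ s) k)
    (b := fun s => u k + s * c) (by simp [coords_prodPow]) fun s => ?_) s
  have := hh (coords hN (prodPow n g u * h ^ s))
  rw [prodPow_coords, mul_assoc, ← zpow_add_one] at this
  rw [this]
  ring

theorem isUnitriangularMul_zpow {h : Γ} {j : Fin n}
    (hstep : ∀ k, ∃ ψ ∈ intPoly (Fin n), ∀ u,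
      coords hN (prodPow n g u * h) k = u k + ψ ((Set.Iio k).indicator u))
    (hlow : ∀ k ≤ j, ∀ u, coords hN (prodPow n g u * h) k = u k + (Pi.single j 1 : Fin n → ℤ) k) :
    IsUnitriangularMul hN (fun y => h ^ y j) (Set.range (Pi.single j)) := by
  have hF : IsUnitriangular fun (_ : Unit → ℤ) u => coords hN (prodPow n g u * h) := fun k => by
    obtain ⟨ψ, hψ, hψeq⟩ := hstep k
    exact ⟨fun v => ψ fun i => v (.inr i), comp_mem_intPoly hψ fun i => apply_mem_intPoly _,
      fun _ u => hψeq u⟩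
  have hiter := hF.iterate (f := fun _ s u => coords hN (prodPow n g u * h ^ s))
    (fun _ u => by rw [zpow_zero, mul_one, coords_prodPow])
    (fun _ s u => by rw [prodPow_coords, zpow_add_one, mul_assoc])
  intro k
  by_cases hjk : j < k
  · obtain ⟨Φ, hΦ, hΦeq⟩ := hiter k
    refine ⟨fun v => Φ (Sum.elim (Sum.elim 0 fun _ => v (.inr j)) fun i => v (.inl i)),
      comp_mem_intPoly hΦ ?_, ?_⟩
    · rintro ((⟨⟩ | ⟨⟩) | i)
      · exact zero_mem _
      · exact apply_mem_intPoly _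
      · exact apply_mem_intPoly _
    · rintro u _ ⟨s, rfl⟩
      simp only [Pi.single_eq_same, Sum.elim_inr, Sum.elim_inl,
        Set.indicator_of_mem (Set.mem_Iio.2 hjk), Pi.single_eq_of_ne hjk.ne', add_zero]
      exact hΦeq (Sum.elim 0 fun _ => s) u
  · refine ⟨0, zero_mem _, ?_⟩
    rintro u _ ⟨s, rfl⟩
    simp only [Pi.single_eq_same, coords_mul_zpow_apply (hlow k (not_lt.1 hjk)), Pi.zero_apply,
      add_zero, Pi.single_apply]
    split_ifs <;> simp

theorem IsUnitriangularMul.zpow_prodPow {m : ℕ}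
    (H : IsUnitriangularMul hN (prodPow n g) (supportedFrom m)) {j : Fin n} (hmj : m ≤ j)
    {τ : Fin n → ℤ} (hτ : ∀ k ≤ j, τ k = (Pi.single j 1 : Fin n → ℤ) k) :
    IsUnitriangularMul hN (fun y => prodPow n g τ ^ y j) (Set.range (Pi.single j)) := by
  have hτm : τ ∈ supportedFrom m := fun i hi => by
    rw [hτ i (Fin.le_def.2 (by omega)), Pi.single_eq_of_ne (Fin.ne_of_lt (Fin.lt_def.2 (by omega)))]
  refine isUnitriangularMul_zpow (fun k => ?_) fun k hk u => ?_
  · obtain ⟨φ, hφ, hφeq⟩ := H k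
    refine ⟨fun w => τ k + φ (Sum.elim w ((Set.Iio k).indicator τ)),
      add_mem (intCast_mem _ (τ k)) (comp_mem_intPoly hφ (sumElim_apply_mem_intPoly
        (fun i => apply_mem_intPoly _) fun i => intCast_mem _ _)), fun u => ?_⟩
    rw [hφeq u τ hτm]
    ring
  · have hτk : (Set.Iio k).indicator τ = 0 := funext fun i => Set.indicator_apply_eq_zero.2
      fun hi => by rw [hτ i (le_of_lt (lt_of_lt_of_le hi hk)),
        Pi.single_eq_of_ne (ne_of_lt (lt_of_lt_of_le hi hk))]
    rw [H.coords_mul_of_indicator_eq_zero (fun _ _ => rfl) prodPow_zero hτm hτk, hτ k hk]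

theorem isUnitriangularMul_zpow_of_conj {j : Fin n}
    (H : IsUnitriangularMul hN (fun y => (g j)⁻¹ * prodPow n g y * g j) (supportedFrom (j + 1))) :
    IsUnitriangularMul hN (fun y => g j ^ y j) (Set.range (Pi.single j)) := by
  have hy (u : Fin n → ℤ) : (Set.Ioi j).indicator u ∈ supportedFrom (j + 1) := fun i hi =>
    Set.indicator_of_notMem (Set.notMem_Ioi.2 (Fin.le_def.2 (Nat.lt_succ_iff.1 hi))) u
  have hsum (u : Fin n → ℤ) (k : Fin n) :
      ((Set.Iic j).indicator u + Pi.single j 1 : Fin n → ℤ) k +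
      (Set.Ioi j).indicator u k = u k + (Pi.single j 1 : Fin n → ℤ) k := by
    by_cases hk : k ≤ j
    · simp [hk, not_lt.2 hk]
    · simp [hk, not_le.1 hk, (not_le.1 hk).ne']
  refine isUnitriangularMul_zpow (fun k => ?_) fun k hk u => ?_
  · obtain ⟨φ, hφ, hφeq⟩ := H k
    refine ⟨fun w => (Pi.single j 1 : Fin n → ℤ) k + φ (Sum.elim
      ((Set.Iic j).indicator w + (Set.Iio k).indicator (Pi.single j 1)) ((Set.Ioi j).indicator w)),
      add_mem (intCast_mem _ _) (comp_mem_intPoly hφ (sumElim_apply_mem_intPoly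
        (fun i => add_mem (indicator_apply_mem_intPoly _ (apply_mem_intPoly _)) (intCast_mem _ _))
        fun i => indicator_apply_mem_intPoly _ (apply_mem_intPoly _))), fun u => ?_⟩
    rw [prodPow_mul_eq_mul_conj, hφeq _ _ (hy u), hsum, Set.indicator_add']
    simp only [Set.indicator_indicator, Set.inter_comm]
    ring
  · have hyk : (Set.Iio k).indicator ((Set.Ioi j).indicator u) = 0 :=
      funext fun i => Set.indicator_apply_eq_zero.2 fun hi =>
        Set.indicator_of_notMem (Set.notMem_Ioi.2 (le_of_lt (lt_of_lt_of_le hi hk))) u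
    rw [prodPow_mul_eq_mul_conj, H.coords_mul_of_indicator_eq_zero (fun _ _ => rfl) (by
      simp [prodPow_zero]) (hy u) hyk, hsum]

theorem isUnitriangularMul_zpow_generator
    (hrel : ∀ i j : Fin n, i < j → ∃ τ : Fin n → ℤ,
      (∀ k ≤ j, τ k = (Pi.single j 1 : Fin n → ℤ) k) ∧ (g i)⁻¹ * g j * g i = prodPow n g τ)
    (j : Fin n) : IsUnitriangularMul hN (fun y => g j ^ y j) (Set.range (Pi.single j)) := by
  suffices h : ∀ m ≤ n, ∀ j : Fin n, m ≤ j →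
      IsUnitriangularMul hN (fun y => g j ^ y j) (Set.range (Pi.single j)) from
    h 0 (Nat.zero_le n) j (Nat.zero_le j)
  intro m hm
  induction hm using Nat.decreasingInduction with
  | self => exact fun j hj => absurd j.isLt (not_lt.2 hj)
  | of_succ m hm ih =>
    intro j hj
    rcases hj.lt_or_eq with hj | rfl
    · exact ih j hj
    have hmul : IsUnitriangularMul hN (prodPow n g) (supportedFrom (j + 1)) :=
      isUnitriangularMul_map_prodPow (MonoidHom.id Γ) hm ih
    have hmulConj := isUnitriangularMul_map_prodPow (hN := hN) (MulAut.conj (g j)⁻¹).toMonoidHom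
      hm fun i hi => by
        obtain ⟨τ, hτ, hconj⟩ := hrel j i (Fin.lt_def.2 hi)
        convert hmul.zpow_prodPow hi hτ using 2 with y
        rw [map_zpow, ← hconj]
        simp
    exact isUnitriangularMul_zpow_of_conj (by simpa using hmulConj)

theorem exists_coords_zpow_eq_eval
    (hrel : ∀ i j : Fin n, i < j → ∃ τ : Fin n → ℤ,
      (∀ k ≤ j, τ k = (Pi.single j 1 : Fin n → ℤ) k) ∧ (g i)⁻¹ * g j * g i = prodPow n g τ) :
    ∃ K : Fin n → MvPolynomial (Fin n ⊕ Unit) ℚ, ∀ (x : Fin n → ℤ) (z : ℤ) (k : Fin n),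
      (coords hN (prodPow n g x ^ z) k : ℚ) =
        eval (Sum.elim (fun i => (x i : ℚ)) fun _ => (z : ℚ)) (K k) := by
  have hmul : IsUnitriangularMul hN (prodPow n g) (supportedFrom 0) :=
    isUnitriangularMul_map_prodPow (MonoidHom.id Γ) (Nat.zero_le n) fun i _ =>
      isUnitriangularMul_zpow_generator hrel i
  have hF : IsUnitriangular fun x u => coords hN (prodPow n g u * prodPow n g x) := fun k => by
    obtain ⟨φ, hφ, hφeq⟩ := hmul k
    refine ⟨fun v => v (.inl k) + φ (Sum.elim (fun i => v (.inr i))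
      ((Set.Iio k).indicator fun i => v (.inl i))), add_mem (apply_mem_intPoly _)
        (comp_mem_intPoly hφ (sumElim_apply_mem_intPoly (fun i => apply_mem_intPoly _)
          fun i => indicator_apply_mem_intPoly _ (apply_mem_intPoly _))), fun x u => ?_⟩
    simp only [hφeq u x fun _ h => absurd h (Nat.not_lt_zero _), Sum.elim_inl, Sum.elim_inr]
    ring
  have hiter := hF.iterate (f := fun x s u => coords hN (prodPow n g u * prodPow n g x ^ s))
    (fun _ u => by rw [zpow_zero, mul_one, coords_prodPow])
    (fun _ s u => by rw [prodPow_coords, zpow_add_one, mul_assoc])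
  choose Φ hΦ hΦeq using hiter
  choose K hK using fun k => mem_intPoly.1 (comp_mem_intPoly (hΦ k) (F := fun v => Sum.elim v 0)
    (sumElim_apply_mem_intPoly (fun i => apply_mem_intPoly _) fun _ => zero_mem _))
  refine ⟨K, fun x z k => ?_⟩
  have hpt : (Sum.elim (fun i => (x i : ℚ)) fun _ : Unit => (z : ℚ)) =
      fun w => ((Sum.elim x (fun _ : Unit => z) w : ℤ) : ℚ) := by
    ext (i | ⟨⟩) <;> rfl
  rw [hpt, hK]
  simpa [prodPow_zero] using hΦeq k (Sum.elim x fun _ => z) 0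

end Collection

theorem exists_conj_a_eq_prodPow {n : ℕ} {t : Fin n → Fin n → Fin n → ℤ} {i j : Fin n}
    (hij : i < j) : ∃ τ : Fin n → ℤ, (∀ k ≤ j, τ k = (Pi.single j 1 : Fin n → ℤ) k) ∧
      (a n t i)⁻¹ * a n t j * a n t i = prodPow n (a n t) τ := by
  set tail : Fin n → ℤ := fun k => if j < k then t i j k else 0
  have hrel : a n t j * a n t i = a n t i * a n t j * prodPow n (a n t) tail := by
    have h := PresentedGroup.one_of_mem (rels := rels n t) ⟨i, j, hij, rfl⟩
    rw [map_mul, map_inv, inv_mul_eq_one, map_mul, map_mul, map_prodPow, map_mul] at h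
    exact h.symm
  refine ⟨Pi.single j 1 + tail, fun k hk => by simp [tail, not_lt.2 hk], ?_⟩
  have h₁ : (Set.Iio j).indicator (Pi.single j 1 + tail) = 0 := by
    ext k
    by_cases hk : k < j
    · simp [tail, hk, hk.ne, hk.not_gt]
    · simp [hk]
  have h₂ : (Set.Ioi j).indicator (Pi.single j 1 + tail) = tail := by
    ext k
    by_cases hk : j < k
    · simp [tail, hk, hk.ne']
    · simp [tail, hk]
  rw [prodPow_eq_mul_zpow_mul _ j, h₁, h₂, prodPow_zero, mul_assoc, hrel]
  simp [tail, mul_assoc]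

/-- Hall's theorem, powering polynomials: if `G(t)` is consistent, there exist rational
polynomials `K_1, …, K_n` in the variables `x_1, …, x_n, z` that take integer values on
integer arguments and satisfy
`(a_1^{x_1} ⋯ a_n^{x_n})^z = a_1^{K_1(x,z)} ⋯ a_n^{K_n(x,z)}` in `G(t)` for all `x ∈ ℤⁿ`
and `z ∈ ℤ`. -/
theorem exists_powering_polynomials (n : ℕ) (t : Fin n → Fin n → Fin n → ℤ)
    (hN : Function.Bijective (N n t)) :
    ∃ K : Fin n → MvPolynomial (Fin n ⊕ Unit) ℚ,
      ∀ (x : Fin n → ℤ) (z : ℤ), ∃ v : Fin n → ℤ,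
        (∀ i : Fin n, (v i : ℚ) =
          MvPolynomial.eval (Sum.elim (fun i => (x i : ℚ)) (fun _ => (z : ℚ))) (K i)) ∧
        N n t x ^ z = N n t v := by
  have hN' : Function.Bijective (prodPow n (a n t)) := hN
  obtain ⟨K, hK⟩ :=
    exists_coords_zpow_eq_eval (hN := hN') fun _ _ hij => exists_conj_a_eq_prodPow hij
  exact ⟨K, fun x z => ⟨coords hN' (N n t x ^ z), hK x z, (prodPow_coords hN' _).symm⟩⟩

end HallPoly
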